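/- arXiv:2209.14982 — 3 statements merged into one kernel-verified Lean document; each statement's English description precedes it below -/
import Mathlib

section
/- Let U be a compact metric space, let v : ℝ^d → P(U) be a measurable map into the space of Borel probability measures on U, and for each n let {U_{n,i}}_{i=1}^{k_n} be a measurable partition of U with diam(U_{n,i}) < 2/n, with representative points ζ_{n,i} ∈ U_{n,i}. Define v_n(x) = Σ_i v(x)(U_{n,i}) δ_{ζ_{n,i}}. Then for all f ∈ L¹(ℝ^d) ∩ L²(ℝ^d) and all bounded continuous g : ℝ^d × U → ℝ, lim_{n→∞} ∫_{ℝ^d} f(x) ∫_U g(x,ζ) v_n(x)(dζ) dx = ∫_{ℝ^d} f(x) ∫_U g(x,ζ) v(x)(dζ) dx. -/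
/-!
On each cell of the `n`-th partition the quantized integrand `g(x, ζ_{n,i})` differs from
`g(x, ·)` by at most the modulus of uniform continuity of `g(x, ·)` at scale `2 / n`, so
`∫ g(x, ·) dv_n(x) → ∫ g(x, ·) dv(x)` for every `x`. These integrals are bounded by `M`, and
`|f| M` is integrable, so dominated convergence gives the claim. Measurability of the integrands
comes from measurability of `x ↦ v(x)(F)` for closed `F`, obtained by approximating `1_F` with
thickened indicators.
-/

open MeasureTheory Filter Set Function BoundedContinuousFunction
open scoped NNReal Topology

theorem Measurable.measure_of_measurable_integral_boundedContinuous {X U : Type*}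
    [MeasurableSpace X] [PseudoEMetricSpace U] [MeasurableSpace U] [BorelSpace U]
    {μ : X → Measure U} [∀ x, IsProbabilityMeasure (μ x)]
    (h : ∀ g : U →ᵇ ℝ, Measurable fun x => ∫ u, g u ∂μ x) :
    Measurable μ := by
  refine .measure_of_isPiSystem_of_isProbabilityMeasure
    (BorelSpace.measurable_eq.trans borel_eq_generateFrom_isClosed) isPiSystem_isClosed
    fun F hF => ?_
  have hδ : ∀ n : ℕ, (0 : ℝ) < 1 / (n + 1) := fun _ => Nat.one_div_pos_of_nat
  have hreal : Measurable fun x => (μ x).real F :=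
    measurable_of_tendsto_metrizable
      (fun n => h ((thickenedIndicator (hδ n) F).comp _ NNReal.isometry_coe.lipschitz))
      (tendsto_pi_nhds.2 fun x => tendsto_integral_thickenedIndicator_of_isClosed (μ x) hF hδ
        tendsto_one_div_add_atTop_nhds_zero_nat)
  simpa only [measureReal_def, ENNReal.ofReal_toReal (measure_ne_top _ _)] using
    hreal.ennreal_ofReal

structure IsMeasurablePartition {α ι : Type*} [MeasurableSpace α] (s : ι → Set α) : Prop where
  measurableSet : ∀ i, MeasurableSet (s i)
  pairwise_disjoint : Pairwise (Disjoint on s)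
  iUnion_eq_univ : ⋃ i, s i = univ

namespace IsMeasurablePartition

variable {α ι : Type*} [MeasurableSpace α] [Fintype ι] {μ : Measure α} [IsFiniteMeasure μ]
  {s : ι → Set α}

theorem sum_measureReal (hs : IsMeasurablePartition s) : ∑ i, μ.real (s i) = μ.real univ := by
  rw [← hs.iUnion_eq_univ, measureReal_iUnion_fintype hs.pairwise_disjoint hs.measurableSet]

theorem abs_sum_measureReal_mul_le (hs : IsMeasurablePartition s) {g : α → ℝ} {M : ℝ}
    (hg : ∀ y, |g y| ≤ M) (z : ι → α) :
    |∑ i, μ.real (s i) * g (z i)| ≤ M * μ.real univ := by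
  calc |∑ i, μ.real (s i) * g (z i)| ≤ ∑ i, μ.real (s i) * M :=
        (Finset.abs_sum_le_sum_abs _ _).trans <| Finset.sum_le_sum fun i _ => by
          rw [abs_mul, abs_of_nonneg measureReal_nonneg]
          exact mul_le_mul_of_nonneg_left (hg _) measureReal_nonneg
    _ = M * μ.real univ := by rw [← Finset.sum_mul, hs.sum_measureReal, mul_comm]

theorem abs_sum_measureReal_mul_sub_integral_le (hs : IsMeasurablePartition s) {g : α → ℝ}
    (hg : Integrable g μ) {z : ι → α} {ε : ℝ} (hε : ∀ i, ∀ y ∈ s i, |g (z i) - g y| ≤ ε) :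
    |∑ i, μ.real (s i) * g (z i) - ∫ y, g y ∂μ| ≤ ε * μ.real univ := by
  have hcell : ∀ i, μ.real (s i) * g (z i) - ∫ y in s i, g y ∂μ
      = ∫ y in s i, (g (z i) - g y) ∂μ := fun i => by
    rw [integral_sub (integrable_const _) hg.integrableOn, setIntegral_const, smul_eq_mul]
  have hsplit : ∫ y, g y ∂μ = ∑ i, ∫ y in s i, g y ∂μ := by
    rw [← integral_iUnion_fintype hs.measurableSet hs.pairwise_disjoint
      fun _ => hg.integrableOn, hs.iUnion_eq_univ, Measure.restrict_univ]
  calc |∑ i, μ.real (s i) * g (z i) - ∫ y, g y ∂μ|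
      = |∑ i, ∫ y in s i, (g (z i) - g y) ∂μ| := by
        simp only [hsplit, ← Finset.sum_sub_distrib, hcell]
    _ ≤ ∑ i, ε * μ.real (s i) :=
        (Finset.abs_sum_le_sum_abs _ _).trans <| Finset.sum_le_sum fun i _ =>
          (Real.norm_eq_abs _).symm.trans_le <| norm_setIntegral_le_of_norm_le_const
            (measure_lt_top _ _) fun y hy => (Real.norm_eq_abs _).trans_le (hε i y hy)
    _ = ε * μ.real univ := by rw [← Finset.mul_sum, hs.sum_measureReal]

end IsMeasurablePartition

theorem tendsto_sum_measureReal_mul_integral_of_diam_le {U : Type*} [PseudoMetricSpace U]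
    [CompactSpace U] [MeasurableSpace U] [OpensMeasurableSpace U] (μ : Measure U)
    [IsFiniteMeasure μ]
    {ι : ℕ → Type*} [∀ n, Fintype (ι n)] {s : ∀ n, ι n → Set U} {z : ∀ n, ι n → U}
    {δ : ℕ → ℝ} (hs : ∀ᶠ n in atTop, IsMeasurablePartition (s n))
    (hz : ∀ᶠ n in atTop, ∀ i, z n i ∈ s n i)
    (hdiam : ∀ᶠ n in atTop, ∀ i, Metric.diam (s n i) ≤ δ n) (hδ : Tendsto δ atTop (𝓝 0))
    {g : U → ℝ} (hg : Continuous g) :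
    Tendsto (fun n => ∑ i, μ.real (s n i) * g (z n i)) atTop (𝓝 (∫ y, g y ∂μ)) := by
  rw [Metric.tendsto_nhds]
  intro ε hε
  set ε' := ε / (μ.real univ + 1)
  have hε' : 0 < ε' := by positivity
  obtain ⟨r, hr, hgr⟩ := Metric.uniformContinuous_iff.1
    (CompactSpace.uniformContinuous_of_continuous hg) ε' hε'
  filter_upwards [hs, hz, hdiam, hδ.eventually (gt_mem_nhds hr)] with n hsn hzn hdn hδn
  have hosc : ∀ i, ∀ y ∈ s n i, |g (z n i) - g y| ≤ ε' := fun i y hy =>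
    (hgr <| (Metric.dist_le_diam_of_mem Metric.isBounded_of_compactSpace (hzn i) hy).trans_lt
      ((hdn i).trans_lt hδn)).le
  calc dist _ _ ≤ ε' * μ.real univ := by
        rw [Real.dist_eq]
        exact hsn.abs_sum_measureReal_mul_sub_integral_le
          (hg.integrable_of_hasCompactSupport (HasCompactSupport.of_compactSpace g)) hosc
    _ < ε' * (μ.real univ + 1) := mul_lt_mul_of_pos_left (lt_add_one _) hε'
    _ = ε := div_mul_cancel₀ _ (by positivity)

/-- `v_n(x) = Σ_i v(x)(U_{n,i}) δ_{ζ_{n,i}}`, so `∫ g(x,·) dv_n(x) = Σ_i v(x)(U_{n,i}) g(x, ζ_{n,i})`. -/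
theorem stmt_2_general {d : ℕ} {U : Type*} [MetricSpace U] [CompactSpace U]
    [MeasurableSpace U] [BorelSpace U]
    (v : (Fin d → ℝ) → ProbabilityMeasure U)
    (hv : ∀ g : U → ℝ, Continuous g →
      Measurable fun x => ∫ ζ, g ζ ∂(v x : Measure U))
    (k : ℕ → ℕ) (Un : ∀ n, Fin (k n) → Set U) (ζpt : ∀ n, Fin (k n) → U)
    (hmeas : ∀ n i, MeasurableSet (Un n i))
    (hdisj : ∀ n, 1 ≤ n → Pairwise (Function.onFun Disjoint (Un n)))
    (hcover : ∀ n, 1 ≤ n → (⋃ i, Un n i) = Set.univ)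
    (hdiam : ∀ n, 1 ≤ n → ∀ i, Metric.diam (Un n i) < 2 / n)
    (hpt : ∀ n, 1 ≤ n → ∀ i, ζpt n i ∈ Un n i)
    (f : (Fin d → ℝ) → ℝ) (hf1 : Integrable f)
    (g : (Fin d → ℝ) × U → ℝ) (hg : Continuous g) (M : ℝ) (hgb : ∀ p, |g p| ≤ M) :
    Tendsto
      (fun n => ∫ x, f x * ∑ i : Fin (k n),
        ((v x (Un n i) : ℝ≥0) : ℝ) * g (x, ζpt n i))
      atTop
      (𝓝 (∫ x, f x * ∫ z, g (x, z) ∂(v x : Measure U))) := by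
  have hv_meas : Measurable fun x => (v x : Measure U) :=
    .measure_of_measurable_integral_boundedContinuous fun g => hv g g.continuous
  have hpart : ∀ᶠ n in atTop, IsMeasurablePartition (Un n) :=
    (eventually_ge_atTop 1).mono fun n hn => ⟨hmeas n, hdisj n hn, hcover n hn⟩
  have hcell_meas : ∀ n i, Measurable fun x => (v x : Measure U).real (Un n i) := fun n i =>
    ((Measure.measurable_coe (hmeas n i)).comp hv_meas).ennreal_toReal
  simp only [← ProbabilityMeasure.measureReal_eq_coe_coeFn]
  refine tendsto_integral_filter_of_dominated_convergence (fun x => |f x| * M)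
    (.of_forall fun n => hf1.aestronglyMeasurable.mul <| Measurable.aestronglyMeasurable <|
      Finset.measurable_sum _ fun i _ => (hcell_meas n i).mul (by fun_prop))
    (hpart.mono fun n hn => .of_forall fun x => ?_) (hf1.abs.mul_const M)
    (.of_forall fun x => ?_)
  · simpa [abs_mul] using mul_le_mul_of_nonneg_left
      (hn.abs_sum_measureReal_mul_le (μ := (v x : Measure U)) (fun z => hgb (x, z)) (ζpt n))
      (abs_nonneg (f x))
  · exact (tendsto_sum_measureReal_mul_integral_of_diam_le _ hpart
      ((eventually_ge_atTop 1).mono hpt)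
      ((eventually_ge_atTop 1).mono fun n hn i => (hdiam n hn i).le)
      (tendsto_const_div_atTop_nhds_zero_nat 2) (by fun_prop)).const_mul (f x)

/-- denseness of finite-action quantized policies in the Borkar topology.
`v_n(x) = Σ_i v(x)(U_{n,i}) δ_{ζ_{n,i}}`, so `∫ g(x,·) dv_n(x) = Σ_i v(x)(U_{n,i}) g(x, ζ_{n,i})`. -/
theorem stmt_2 {d : ℕ} {U : Type*} [MetricSpace U] [CompactSpace U]
    [MeasurableSpace U] [BorelSpace U]
    (v : (Fin d → ℝ) → ProbabilityMeasure U)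
    (hv : ∀ g : U → ℝ, Continuous g →
      Measurable fun x => ∫ ζ, g ζ ∂(v x : Measure U))
    (k : ℕ → ℕ) (Un : ∀ n, Fin (k n) → Set U) (ζpt : ∀ n, Fin (k n) → U)
    (hmeas : ∀ n i, MeasurableSet (Un n i))
    (hdisj : ∀ n, 1 ≤ n → Pairwise (Function.onFun Disjoint (Un n)))
    (hcover : ∀ n, 1 ≤ n → (⋃ i, Un n i) = Set.univ)
    (hdiam : ∀ n, 1 ≤ n → ∀ i, Metric.diam (Un n i) < 2 / n)
    (hpt : ∀ n, 1 ≤ n → ∀ i, ζpt n i ∈ Un n i)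
    (f : (Fin d → ℝ) → ℝ) (hf1 : Integrable f) (hf2 : MemLp f 2)
    (g : (Fin d → ℝ) × U → ℝ) (hg : Continuous g) (M : ℝ) (hgb : ∀ p, |g p| ≤ M) :
    Tendsto
      (fun n => ∫ x, f x * ∑ i : Fin (k n),
        ((v x (Un n i) : ℝ≥0) : ℝ) * g (x, ζpt n i))
      atTop
      (𝓝 (∫ x, f x * ∫ z, g (x, z) ∂(v x : Measure U))) :=
  stmt_2_general v hv k Un ζpt hmeas hdisj hcover hdiam hpt f hf1 g hg M hgb
end

section
/- Let η_n, η be probability measures on ℝ^d with densities φ_n, φ ∈ L¹(ℝ^d) (with respect to Lebesgue measure) such that φ_n → φ in L¹(ℝ^d). Let U be a compact metric space, c : ℝ^d × U → ℝ bounded measurable, and v_n, v : ℝ^d → P(U) measurable with ∫_{ℝ^d} f(x) ∫_U g(x,ζ) v_n(x)(dζ) dx → ∫_{ℝ^d} f(x) ∫_U g(x,ζ) v(x)(dζ) dx for all f ∈ L¹ ∩ L² and bounded continuous g. If additionally c is bounded continuous, then ∫_{ℝ^d} ∫_U c(x,ζ) v_n(x)(dζ) η_n(dx) → ∫_{ℝ^d}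 ∫_U c(x,ζ) v(x)(dζ) η(dx). -/
open MeasureTheory Filter
open scoped Topology

/-!
Write `C n x = ∫ c(x, ζ) d(v n x)(ζ)` and split
`∫ C n φn - ∫ C w φ = ∫ C n (φn - φ) + (∫ C n φ - ∫ C w φ)`.
Since `|C n| ≤ M`, the first term is at most `M ‖φn - φ‖₁ → 0`; the second tends to `0` by the
Borkar-topology convergence of `v n` to `w`, tested against `f = φ` and `g = c`.
-/

lemma ContinuousMap.lipschitzWith_integral {U : Type*} [TopologicalSpace U] [CompactSpace U]
    [MeasurableSpace U] [OpensMeasurableSpace U] (μ : Measure U) [IsFiniteMeasure μ] :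
    LipschitzWith (μ.real Set.univ).toNNReal fun g : C(U, ℝ) => ∫ ζ, g ζ ∂μ := by
  have hint (g : C(U, ℝ)) : Integrable g μ :=
    (BoundedContinuousFunction.mkOfCompact g).integrable μ
  refine LipschitzWith.of_dist_le_mul fun f g => ?_
  rw [dist_eq_norm, dist_eq_norm, ← integral_sub (hint f) (hint g),
    Real.coe_toNNReal _ measureReal_nonneg, mul_comm]
  exact norm_integral_le_of_norm_le_const (ae_of_all _ fun ζ => (f - g).norm_coe_le_norm ζ)

/-- `(g, x) ↦ ∫ g ∂μ x` is continuous in `g ∈ C(U, ℝ)` (a separable metric space) and measurable in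
`x`, hence jointly measurable; evaluate it along the continuous curve `x ↦ c(x, ·)`. -/
lemma measurable_integral_of_forall_continuous {X U : Type*}
    [TopologicalSpace X] [MeasurableSpace X] [OpensMeasurableSpace X]
    [MetricSpace U] [CompactSpace U] [MeasurableSpace U] [OpensMeasurableSpace U]
    (μ : X → Measure U) [∀ x, IsFiniteMeasure (μ x)]
    (hμ : ∀ g : U → ℝ, Continuous g → Measurable fun x => ∫ ζ, g ζ ∂μ x)
    (c : X × U → ℝ) (hc : Continuous c) :
    Measurable fun x => ∫ ζ, c (x, ζ) ∂μ x := by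
  borelize C(U, ℝ)
  have hmeas : Measurable (Function.uncurry fun (g : C(U, ℝ)) x => ∫ ζ, g ζ ∂μ x) :=
    measurable_uncurry_of_continuous_of_measurable
      (fun x => (ContinuousMap.lipschitzWith_integral (μ x)).continuous)
      (fun g => hμ g g.continuous)
  exact hmeas.comp ((ContinuousMap.mk c hc).curry.continuous.measurable.prodMk measurable_id)

lemma abs_integral_mul_sub_integral_mul_le {α : Type*} [MeasurableSpace α] {μ : Measure α}
    {G ψ₁ ψ₂ : α → ℝ} {M : ℝ} (hG : AEStronglyMeasurable G μ) (hGM : ∀ x, |G x| ≤ M)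
    (hψ₁ : Integrable ψ₁ μ) (hψ₂ : Integrable ψ₂ μ) :
    |∫ x, G x * ψ₁ x ∂μ - ∫ x, G x * ψ₂ x ∂μ| ≤ M * ∫ x, |ψ₁ x - ψ₂ x| ∂μ := by
  have hGM' : ∀ᵐ x ∂μ, ‖G x‖ ≤ M := ae_of_all _ hGM
  rw [← integral_sub (hψ₁.bdd_mul hG hGM') (hψ₂.bdd_mul hG hGM'), ← integral_const_mul]
  refine abs_integral_le_integral_abs.trans <| integral_mono_of_nonneg
    (ae_of_all _ fun _ => abs_nonneg _) ((hψ₁.sub hψ₂).abs.const_mul M) (ae_of_all _ fun x => ?_)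
  simp only [← mul_sub, abs_mul]
  exact mul_le_mul_of_nonneg_right (hGM x) (abs_nonneg _)

lemma tendsto_integral_mul_sub_integral_mul {α : Type*} [MeasurableSpace α] {μ : Measure α}
    {G ψ : ℕ → α → ℝ} {ψ₀ : α → ℝ} {M : ℝ} (hG : ∀ n, AEStronglyMeasurable (G n) μ)
    (hGM : ∀ n x, |G n x| ≤ M) (hψ : ∀ n, Integrable (ψ n) μ) (hψ₀ : Integrable ψ₀ μ)
    (hL1 : Tendsto (fun n => ∫ x, |ψ n x - ψ₀ x| ∂μ) atTop (𝓝 0)) :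
    Tendsto (fun n => ∫ x, G n x * ψ n x ∂μ - ∫ x, G n x * ψ₀ x ∂μ) atTop (𝓝 0) := by
  refine squeeze_zero_norm (fun n => ?_) (by simpa using hL1.const_mul M)
  exact abs_integral_mul_sub_integral_mul_le (hG n) (hGM n) (hψ n) hψ₀

lemma abs_integral_le_of_abs_le {U : Type*} [MeasurableSpace U] (μ : Measure U)
    [IsProbabilityMeasure μ] {g : U → ℝ} {M : ℝ} (hg : ∀ ζ, |g ζ| ≤ M) :
    |∫ ζ, g ζ ∂μ| ≤ M := by
  simpa using norm_integral_le_of_norm_le_const (μ := μ)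
    (ae_of_all _ fun ζ => (Real.norm_eq_abs _).trans_le (hg ζ))

theorem stmt_12_general {d : ℕ} {U : Type*} [MetricSpace U] [CompactSpace U]
    [MeasurableSpace U] [BorelSpace U]
    (φn : ℕ → (Fin d → ℝ) → ℝ) (φ : (Fin d → ℝ) → ℝ)
    (hφn : ∀ n, Integrable (φn n))
    (hφ : Integrable φ) (hφ2 : MemLp φ 2)
    (hL1 : Tendsto (fun n => ∫ x, |φn n x - φ x|) atTop (𝓝 0))
    (v : ℕ → (Fin d → ℝ) → ProbabilityMeasure U)
    (w : (Fin d → ℝ) → ProbabilityMeasure U)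
    (hvmeas : ∀ n (g : U → ℝ), Continuous g →
      Measurable fun x => ∫ ζ, g ζ ∂(v n x : Measure U))
    (hborkar : ∀ f : (Fin d → ℝ) → ℝ, Integrable f → MemLp f 2 →
      ∀ g : (Fin d → ℝ) × U → ℝ, Continuous g → (∃ M, ∀ p, |g p| ≤ M) →
      Tendsto (fun n => ∫ x, f x * ∫ ζ, g (x, ζ) ∂(v n x : Measure U)) atTop
        (𝓝 (∫ x, f x * ∫ ζ, g (x, ζ) ∂(w x : Measure U))))
    (c : (Fin d → ℝ) × U → ℝ) (hc : Continuous c) (M : ℝ) (hcb : ∀ p, |c p| ≤ M) :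
    Tendsto (fun n => ∫ x, (∫ ζ, c (x, ζ) ∂(v n x : Measure U)) * φn n x) atTop
      (𝓝 (∫ x, (∫ ζ, c (x, ζ) ∂(w x : Measure U)) * φ x)) := by
  have hdensity := tendsto_integral_mul_sub_integral_mul (ψ₀ := φ)
    (fun n => (measurable_integral_of_forall_continuous _ (hvmeas n) c hc).aestronglyMeasurable)
    (fun n x => abs_integral_le_of_abs_le _ fun ζ => hcb (x, ζ)) hφn hφ hL1
  have hpolicy : Tendsto (fun n => ∫ x, (∫ ζ, c (x, ζ) ∂(v n x : Measure U)) * φ x) atTop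
      (𝓝 (∫ x, (∫ ζ, c (x, ζ) ∂(w x : Measure U)) * φ x)) := by
    simpa only [mul_comm] using hborkar φ hφ hφ2 c hc ⟨M, hcb⟩
  simpa only [sub_add_cancel, zero_add] using hdensity.add hpolicy

/-- splitting argument in Theorem 3.5: L¹ convergence of densities plus
Borkar-topology convergence of policies gives convergence of the ergodic cost integrals. -/
theorem stmt_12 {d : ℕ} {U : Type*} [MetricSpace U] [CompactSpace U]
    [MeasurableSpace U] [BorelSpace U]
    (φn : ℕ → (Fin d → ℝ) → ℝ) (φ : (Fin d → ℝ) → ℝ)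
    (hφn : ∀ n, Integrable (φn n)) (hφnpos : ∀ n x, 0 ≤ φn n x)
    (hφnprob : ∀ n, ∫ x, φn n x = 1)
    (hφ : Integrable φ) (hφ2 : MemLp φ 2) (hφpos : ∀ x, 0 ≤ φ x)
    (hφprob : ∫ x, φ x = 1)
    (hL1 : Tendsto (fun n => ∫ x, |φn n x - φ x|) atTop (𝓝 0))
    (v : ℕ → (Fin d → ℝ) → ProbabilityMeasure U)
    (w : (Fin d → ℝ) → ProbabilityMeasure U)
    (hvmeas : ∀ n (g : U → ℝ), Continuous g →
      Measurable fun x => ∫ ζ, g ζ ∂(v n x : Measure U))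
    (hwmeas : ∀ g : U → ℝ, Continuous g →
      Measurable fun x => ∫ ζ, g ζ ∂(w x : Measure U))
    (hborkar : ∀ f : (Fin d → ℝ) → ℝ, Integrable f → MemLp f 2 →
      ∀ g : (Fin d → ℝ) × U → ℝ, Continuous g → (∃ M, ∀ p, |g p| ≤ M) →
      Tendsto (fun n => ∫ x, f x * ∫ ζ, g (x, ζ) ∂(v n x : Measure U)) atTop
        (𝓝 (∫ x, f x * ∫ ζ, g (x, ζ) ∂(w x : Measure U))))
    (c : (Fin d → ℝ) × U → ℝ) (hc : Continuous c) (M : ℝ) (hcb : ∀ p, |c p| ≤ M) :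
    Tendsto (fun n => ∫ x, (∫ ζ, c (x, ζ) ∂(v n x : Measure U)) * φn n x) atTop
      (𝓝 (∫ x, (∫ ζ, c (x, ζ) ∂(w x : Measure U)) * φ x)) :=
  stmt_12_general φn φ hφn hφ hφ2 hL1 v w hvmeas hborkar c hc M hcb
end

section
/- Let f ∈ L¹([0,∞) × ℝ^d) ∩ L²([0,∞) × ℝ^d), let U be a compact metric space, and let v : ℝ^d × [0,∞) → P(U) be Borel measurable. Then there exists a sequence of policies v_m : ℝ^d × [0,∞) → P(U), each taking finitely many values and piecewise constant on a countable measurable partition of ℝ^d × [0,∞) into sets of the form (annulus in space) × (interval in time) further partitioned by preimages of Prokhorov cells, such that for all such f and all bounded continuous g : ℝ^d × [0,∞) × U → ℝ, lim_{m→∞} ∫_0^∞ ∫_{ℝ^d} f(x,t) ∫_U g(x,t,ζ) v_m(x,t)(dζ) dx dt = ∫_0^∞ ∫_{ℝ^d} f(x,t) ∫_U g(x,t,ζ) v(x,t)(dζ) dx dt. -/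
/-!
Fix a dense sequence `(gₙ)` in `C(U, ℝ)`. The moment map `p ↦ (∫ gₙ ∂v p)ₙ` is a measurable map
into the separable metrizable space `ℕ → ℝ`, hence a pointwise limit of simple functions taking
values in its own range. Pulling those values back through a right inverse of the moment map gives
simple maps `σₘ` of the base with `v ∘ σₘ → v` moment by moment, hence weakly, because integration
against a probability measure is `1`-Lipschitz on `C(U, ℝ)`. Dominated convergence finishes.
-/

open MeasureTheory Filter
open scoped Topology

section IntegralContinuousMap

variable {U : Type*} [MetricSpace U] [CompactSpace U] [MeasurableSpace U] [BorelSpace U]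

theorem lipschitzWith_integral_continuousMap (μ : Measure U) [IsProbabilityMeasure μ] :
    LipschitzWith 1 fun G : C(U, ℝ) => ∫ ζ, G ζ ∂μ := by
  refine LipschitzWith.of_dist_le_mul fun G₁ G₂ => ?_
  have hint : ∀ G : C(U, ℝ), Integrable G μ :=
    fun G => (BoundedContinuousFunction.mkOfCompact G).integrable μ
  rw [NNReal.coe_one, one_mul, Real.dist_eq, ← integral_sub (hint G₁) (hint G₂),
    dist_eq_norm, ← Real.norm_eq_abs]
  exact (BoundedContinuousFunction.mkOfCompact (G₁ - G₂)).norm_integral_le_norm μ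

theorem tendsto_integral_of_dense {ι : Type*} {l : Filter ι} {μ : ι → ProbabilityMeasure U}
    {ν : ProbabilityMeasure U} {D : Set C(U, ℝ)} (hD : Dense D)
    (h : ∀ G ∈ D, Tendsto (fun i => ∫ ζ, G ζ ∂(μ i : Measure U)) l
      (𝓝 (∫ ζ, G ζ ∂(ν : Measure U)))) (F : C(U, ℝ)) :
    Tendsto (fun i => ∫ ζ, F ζ ∂(μ i : Measure U)) l (𝓝 (∫ ζ, F ζ ∂(ν : Measure U))) := by
  have hequi : Equicontinuous fun i (G : C(U, ℝ)) => ∫ ζ, G ζ ∂(μ i : Measure U) :=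
    (LipschitzWith.uniformEquicontinuous _ 1
      fun i => lipschitzWith_integral_continuousMap (μ i : Measure U)).equicontinuous
  have hclosed := hequi.isClosed_setOfPred_tendsto (l := l)
    (lipschitzWith_integral_continuousMap (ν : Measure U)).continuous
  exact hclosed.closure_subset_iff.2 h (hD F)

end IntegralContinuousMap

theorem Measurable.exists_simpleFunc_tendsto_comp {X E : Type*} [MeasurableSpace X] [Nonempty X]
    [TopologicalSpace E] [TopologicalSpace.PseudoMetrizableSpace E]
    [TopologicalSpace.SeparableSpace E] [MeasurableSpace E] [OpensMeasurableSpace E]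
    {w : X → E} (hw : Measurable w) :
    ∃ σ : ℕ → SimpleFunc X X, ∀ p, Tendsto (fun m => w (σ m p)) atTop (𝓝 (w p)) := by
  let := TopologicalSpace.pseudoMetrizableSpacePseudoMetric E
  obtain ⟨p₀⟩ := ‹Nonempty X›
  let s := fun m => SimpleFunc.approxOn w hw (Set.range w) (w p₀) (Set.mem_range_self p₀) m
  refine ⟨fun m => (s m).map (Function.invFun w), fun p => ?_⟩
  have hs : ∀ m, w ((s m).map (Function.invFun w) p) = s m p := fun m =>
    Function.invFun_eq (SimpleFunc.approxOn_mem hw _ m p : s m p ∈ Set.range w)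
  simpa only [hs] using SimpleFunc.tendsto_approxOn hw _ (subset_closure (Set.mem_range_self p))

theorem continuous_integral_of_continuous_uncurry {X U : Type*} [TopologicalSpace X]
    [FirstCountableTopology X] [LocallyCompactSpace X] [TopologicalSpace U] [CompactSpace U]
    [MeasurableSpace U] [OpensMeasurableSpace U] (μ : Measure U) [IsFiniteMeasure μ]
    {G : X → U → ℝ} (hG : Continuous (Function.uncurry G)) :
    Continuous fun x => ∫ ζ, G x ζ ∂μ := by
  simpa only [Measure.restrict_univ] using
    continuous_parametric_integral_of_continuous (μ := μ) hG isCompact_univ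

theorem tendsto_integral_mul_of_dominated {X : Type*} [MeasurableSpace X] {μ : Measure X}
    {f : X → ℝ} (hf : Integrable f μ) {F : ℕ → X → ℝ} {F' : X → ℝ} {M : ℝ}
    (hF_meas : ∀ m, AEStronglyMeasurable (F m) μ) (hF_bound : ∀ m p, ‖F m p‖ ≤ M)
    (hF_lim : ∀ p, Tendsto (F · p) atTop (𝓝 (F' p))) :
    Tendsto (fun m => ∫ p, f p * F m p ∂μ) atTop (𝓝 (∫ p, f p * F' p ∂μ)) := by
  refine tendsto_integral_of_dominated_convergence (fun p => |f p| * M)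
    (fun m => hf.aestronglyMeasurable.mul (hF_meas m)) (hf.abs.mul_const M)
    (fun m => Eventually.of_forall fun p => ?_)
    (Eventually.of_forall fun p => (hF_lim p).const_mul _)
  rw [norm_mul, Real.norm_eq_abs]
  exact mul_le_mul_of_nonneg_left (hF_bound m p) (abs_nonneg _)

/-- Theorem 6.2: piecewise constant (finitely-valued, measurable) Markov
policies are dense in the space of Markov policies under the Borkar topology. -/
theorem stmt_17 {d : ℕ} {U : Type*} [MetricSpace U] [CompactSpace U]
    [MeasurableSpace U] [BorelSpace U]
    (v : (Fin d → ℝ) × ℝ → ProbabilityMeasure U)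
    (hv : ∀ g : U → ℝ, Continuous g →
      Measurable fun p => ∫ ζ, g ζ ∂(v p : Measure U)) :
    ∃ vm : ℕ → (Fin d → ℝ) × ℝ → ProbabilityMeasure U,
      (∀ m, (Set.range (vm m)).Finite) ∧
      (∀ m (g : U → ℝ), Continuous g →
        Measurable fun p => ∫ ζ, g ζ ∂(vm m p : Measure U)) ∧
      ∀ f : (Fin d → ℝ) × ℝ → ℝ, Integrable f → MemLp f 2 →
        ∀ g : (Fin d → ℝ) × ℝ × U → ℝ, Continuous g → (∃ M, ∀ q, |g q| ≤ M) →
        Tendsto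
          (fun m => ∫ p in {p : (Fin d → ℝ) × ℝ | 0 ≤ p.2},
            f p * ∫ ζ, g (p.1, p.2, ζ) ∂(vm m p : Measure U)) atTop
          (𝓝 (∫ p in {p : (Fin d → ℝ) × ℝ | 0 ≤ p.2},
            f p * ∫ ζ, g (p.1, p.2, ζ) ∂(v p : Measure U))) := by
  obtain ⟨gs, hgs⟩ := TopologicalSpace.exists_dense_seq C(U, ℝ)
  obtain ⟨σ, hσ⟩ := (measurable_pi_lambda (fun p n => ∫ ζ, gs n ζ ∂(v p : Measure U))
    fun n => hv _ (gs n).continuous).exists_simpleFunc_tendsto_comp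
  refine ⟨fun m => v ∘ σ m, fun m => ?_, fun m g hg => (hv g hg).comp (σ m).measurable, ?_⟩
  · rw [Set.range_comp]
    exact (σ m).finite_range.image v
  rintro f hf - g hg ⟨M, hM⟩
  have hg_cont : Continuous (Function.uncurry fun (p : (Fin d → ℝ) × ℝ) ζ => g (p.1, p.2, ζ)) := by
    fun_prop
  have hweak : ∀ p (F : C(U, ℝ)), Tendsto (fun m => ∫ ζ, F ζ ∂(v (σ m p) : Measure U)) atTop
      (𝓝 (∫ ζ, F ζ ∂(v p : Measure U))) := fun p =>
    tendsto_integral_of_dense hgs fun _ ⟨n, hn⟩ => hn ▸ tendsto_pi_nhds.1 (hσ p) n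
  refine tendsto_integral_mul_of_dominated hf.restrict (M := M) (fun m => ?_) (fun m p => ?_)
    fun p => hweak p ⟨_, hg_cont.comp (Continuous.prodMk_right p)⟩
  · refine ((σ m).measurable_bind (fun x p => ∫ ζ, g (p.1, p.2, ζ) ∂(v x : Measure U))
      fun x => ?_).aestronglyMeasurable
    exact (continuous_integral_of_continuous_uncurry _ hg_cont).measurable
  · calc ‖∫ ζ, g (p.1, p.2, ζ) ∂(v (σ m p) : Measure U)‖
        ≤ M * (v (σ m p) : Measure U).real Set.univ :=
          norm_integral_le_of_norm_le_const (Eventually.of_forall fun ζ => hM _)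
      _ = M := by simp
end
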